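/- For all i ≥ 1 and 0 ≤ k ≤ i, and all r > 0, the functions ψ_j satisfy the Leibniz-type formula ψ_{i−k}(r) = Σ_{m=0}^{k} C(k,m) · (∏_{ℓ=i+1−(k−m)}^{i} −(2ℓ−1)) · r^{2m} · ψ_{i+m}(r), where C(k,m) is the binomial coefficient and empty products equal 1. -/

import Mathlib

/-!
Since `ψ_j'(r) = -r ψ_{j+1}(r)`, differentiating the recurrence
`ψ_j = -(2j+1) ψ_{j+1} + r² ψ_{j+2}` and dividing by `-r` gives it for `j + 1`; at `j = 0` it
follows from `ψ_1 = ψ_0 / r`. The formula is then a fact about any sequence with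
`f j = a (j+1) f (j+1) + c f (j+2)` and `a` affine, writing `i = n + k`: expanding each `f (n+k+m)`
once more raises `k` by one, and the coefficients match by Pascal's rule and the absorption
identity `(m+1) C(k, m+1) = (k-m) C(k, m)`, which is where affineness of `a` enters.
-/

/-- ψ₀(r) = e^{-r}, ψ_{j+1}(r) = -(1/r)·ψ_j'(r). -/
noncomputable def psi : ℕ → ℝ → ℝ
  | 0 => fun r => Real.exp (-r)
  | (j+1) => fun r => -(1/r) * deriv (psi j) r

open Finset

section AffineRecurrence

variable {R : Type*} [CommRing R]

lemma sum_range_succ_succ_eq_add {M : Type*} [AddCommMonoid M] (k : ℕ) (T A B : ℕ → M)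
    (h₀ : T 0 = A 0) (hlast : T (k + 1) = B k)
    (hmid : ∀ m < k, T (m + 1) = A (m + 1) + B m) :
    ∑ m ∈ range (k + 2), T m = ∑ m ∈ range (k + 1), A m + ∑ m ∈ range (k + 1), B m := by
  rw [sum_range_succ', sum_range_succ _ k, sum_congr rfl fun m hm => hmid m (mem_range.mp hm),
    sum_add_distrib, sum_range_succ' A, sum_range_succ B, h₀, hlast]
  abel

lemma prod_Ioc_eq_mul_prod_Ioc_succ {M : Type*} [CommMonoid M] {a b : ℕ} (hab : a < b)
    (f : ℕ → M) : ∏ ℓ ∈ Ioc a b, f ℓ = f (a + 1) * ∏ ℓ ∈ Ioc (a + 1) b, f ℓ := by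
  rw [← insert_Ioc_add_one_left_eq_Ioc hab, prod_insert (by simp)]

lemma choose_mul_add_choose_mul_of_affine {a : ℕ → R} {α β : R}
    (ha : ∀ ℓ : ℕ, a ℓ = α * ℓ + β) (n : ℕ) {k m : ℕ} (hm : m ≤ k) :
    (k.choose (m + 1) : R) * a (n + k + m + 2) + k.choose m * a (n + m + 1) =
      (k + 1).choose (m + 1) * a (n + k + 1) := by
  have habsorb : (k.choose (m + 1) : R) * (m + 1) = k.choose m * (k - m) := by
    have := congrArg (Nat.cast : ℕ → R) (Nat.choose_succ_right_eq k m)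
    push_cast [Nat.cast_sub hm] at this
    exact this
  simp only [ha, Nat.choose_succ_succ', Nat.cast_add]
  push_cast
  linear_combination α * habsorb

theorem eq_sum_choose_mul_prod_of_affine_recurrence {a : ℕ → R} {α β : R}
    (ha : ∀ ℓ : ℕ, a ℓ = α * ℓ + β) (c : R) {f : ℕ → R}
    (hf : ∀ j, f j = a (j + 1) * f (j + 1) + c * f (j + 2)) (n k : ℕ) :
    f n = ∑ m ∈ range (k + 1),
      (k.choose m : R) * (∏ ℓ ∈ Ioc (n + m) (n + k), a ℓ) * c ^ m * f (n + k + m) := by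
  induction k with
  | zero => simp
  | succ k ih =>
    set P : ℕ → R := fun m => ∏ ℓ ∈ Ioc (n + m) (n + k), a ℓ with hP
    have hexpand : f n =
        ∑ m ∈ range (k + 1), k.choose m * P m * c ^ m * a (n + k + m + 1) * f (n + k + m + 1) +
          ∑ m ∈ range (k + 1), k.choose m * P m * c ^ (m + 1) * f (n + k + m + 2) := by
      rw [ih, ← sum_add_distrib]
      refine sum_congr rfl fun m _ => ?_
      rw [hf (n + k + m)]
      ring
    rw [hexpand, ← sum_range_succ_succ_eq_add, ← add_assoc n k 1]
    · simp only [hP, add_zero, Nat.choose_zero_right, pow_zero,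
        prod_Ioc_succ_top (Nat.le_add_right n k)]
      push_cast
      ring
    · simp only [hP, ← add_assoc, Nat.choose_self, Ioc_self, prod_empty,
        show n + k + 1 + k + 1 = n + k + k + 2 by ring]
    · intro m hm
      simp only [hP]
      rw [prod_Ioc_succ_top (show n + (m + 1) ≤ n + k by omega),
        prod_Ioc_eq_mul_prod_Ioc_succ (show n + m < n + k by omega),
        show n + k + 1 + (m + 1) = n + k + m + 2 by ring,
        show n + k + (m + 1) + 1 = n + k + m + 2 by ring, ← add_assoc n m 1]
      linear_combination -(∏ ℓ ∈ Ioc (n + m + 1) (n + k), a ℓ) * c ^ (m + 1) *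
        f (n + k + m + 2) * choose_mul_add_choose_mul_of_affine ha n hm.le

end AffineRecurrence

section Psi

open scoped ContDiff

lemma contDiffOn_psi (j : ℕ) : ContDiffOn ℝ ∞ (psi j) {0}ᶜ := by
  induction j with
  | zero => exact (Real.contDiff_exp.comp contDiff_neg).contDiffOn
  | succ j ih =>
    exact ((contDiffOn_const.div contDiffOn_id fun _ hx => hx).neg).mul
      (ih.deriv_of_isOpen isOpen_compl_singleton le_rfl)

lemma hasDerivAt_psi (j : ℕ) {r : ℝ} (hr : r ≠ 0) :
    HasDerivAt (psi j) (-r * psi (j + 1) r) r := by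
  have hd : DifferentiableAt ℝ (psi j) r :=
    (contDiffOn_psi j).differentiableOn (by simp) |>.differentiableAt
      (isOpen_compl_singleton.mem_nhds hr)
  have h : -r * psi (j + 1) r = deriv (psi j) r := by
    show -r * (-(1 / r) * deriv (psi j) r) = _
    field_simp
  exact h ▸ hd.hasDerivAt

lemma hasDerivAt_psi_zero (r : ℝ) : HasDerivAt (psi 0) (-psi 0 r) r := by
  simpa [psi] using (hasDerivAt_neg r).exp

lemma psi_one_eq_div : psi 1 = fun r => psi 0 r / r := by
  funext r
  show -(1 / r) * deriv (psi 0) r = _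
  rw [(hasDerivAt_psi_zero r).deriv]
  ring

lemma psi_recurrence_zero {r : ℝ} (hr : r ≠ 0) : psi 0 r = -psi 1 r + r ^ 2 * psi 2 r := by
  have h := ((hasDerivAt_psi_zero r).div (hasDerivAt_id r) hr).unique
    (psi_one_eq_div ▸ hasDerivAt_psi 1 hr)
  simp only [id, mul_one] at h
  rw [psi_one_eq_div]
  field_simp at h ⊢
  linear_combination -h

theorem psi_recurrence (j : ℕ) {r : ℝ} (hr : r ≠ 0) :
    psi j r = -(2 * j + 1) * psi (j + 1) r + r ^ 2 * psi (j + 2) r := by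
  induction j generalizing r with
  | zero => simpa using psi_recurrence_zero hr
  | succ j ih =>
    have hsq : HasDerivAt (fun x : ℝ => x ^ 2) (2 * r) r := by simpa using hasDerivAt_pow 2 r
    have hrhs : HasDerivAt (fun x => -(2 * j + 1) * psi (j + 1) x + x ^ 2 * psi (j + 2) x)
        (-(2 * j + 1) * (-r * psi (j + 2) r) +
          (2 * r * psi (j + 2) r + r ^ 2 * (-r * psi (j + 3) r))) r :=
      ((hasDerivAt_psi (j + 1) hr).const_mul _).add (hsq.mul (hasDerivAt_psi (j + 2) hr))
    have hnear : psi j =ᶠ[nhds r]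
        fun x => -(2 * j + 1) * psi (j + 1) x + x ^ 2 * psi (j + 2) x :=
      Filter.eventuallyEq_of_mem (isOpen_compl_singleton.mem_nhds hr) fun x hx => ih hx
    have h := (hrhs.congr_of_eventuallyEq hnear).unique (hasDerivAt_psi j hr)
    have : -r * psi (j + 1) r =
        -r * (-(2 * (j + 1 : ℕ) + 1) * psi (j + 2) r + r ^ 2 * psi (j + 3) r) := by
      push_cast
      linear_combination -h
    exact mul_left_cancel₀ (neg_ne_zero.mpr hr) this

end Psi

theorem psi_leibniz_formula_general (i k : ℕ) (hk : k ≤ i) (r : ℝ) (hr : 0 < r) :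
    psi (i - k) r =
      ∑ m ∈ Finset.range (k+1), (k.choose m : ℝ) *
        (∏ ℓ ∈ Finset.Icc (i + 1 - (k - m)) i, -(2 * (ℓ : ℝ) - 1)) *
        r ^ (2 * m) * psi (i + m) r := by
  obtain ⟨n, rfl⟩ := Nat.exists_eq_add_of_le' hk
  have hrec (j : ℕ) :
      psi j r = -(2 * ((j + 1 : ℕ) : ℝ) - 1) * psi (j + 1) r + r ^ 2 * psi (j + 2) r := by
    rw [psi_recurrence j hr.ne']
    push_cast
    ring
  rw [Nat.add_sub_cancel, eq_sum_choose_mul_prod_of_affine_recurrence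
    (a := fun ℓ : ℕ => -(2 * (ℓ : ℝ) - 1)) (α := -2) (β := 1) (fun ℓ => by ring) (r ^ 2) hrec n k]
  refine sum_congr rfl fun m hm => ?_
  rw [show n + k + 1 - (k - m) = n + m + 1 by grind, Icc_add_one_left_eq_Ioc, pow_mul]

theorem psi_leibniz_formula (i k : ℕ) (hi : 1 ≤ i) (hk : k ≤ i) (r : ℝ) (hr : 0 < r) :
    psi (i - k) r =
      ∑ m ∈ Finset.range (k+1), (k.choose m : ℝ) *
        (∏ ℓ ∈ Finset.Icc (i + 1 - (k - m)) i, -(2 * (ℓ : ℝ) - 1)) *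
        r ^ (2 * m) * psi (i + m) r :=
  psi_leibniz_formula_general i k hk r hr
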